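/- On a (2n+1)-dimensional Riemannian Π-manifold of class F₄ (i.e., with F(x,y,z) = (θ(ξ)/(2n)){g(φx,φy)η(z) + g(φx,φz)η(y)}), the first natural connection is given by Ḋₓy = ∇ₓy − (θ(ξ)/(2n)){g(x,φy)ξ − η(y)φx}. -/

import Mathlib

/-- Algebraic model of a Riemannian Π-manifold: `V` is the module of vector fields
over the commutative ring `C` of (smooth) functions, `g` the metric, `(phi, xi, eta)`
the Π-structure, `d` the directional-derivative action of vector fields on functions,
`nabla` the Levi-Civita connection (torsion-free w.r.t. the bracket `lie` and
metric-compatible), together with the standard identities of the Π-structure. -/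
structure RPM (C : Type*) (V : Type*) [CommRing C] [Algebra ℝ C]
    [AddCommGroup V] [Module C V] where
  g : V →ₗ[C] V →ₗ[C] C
  phi : V →ₗ[C] V
  xi : V
  eta : V →ₗ[C] C
  d : V → C → C
  nabla : V → V → V
  lie : V → V → V
  g_symm : ∀ x y, g x y = g y x
  phi_xi : phi xi = 0
  phi_sq : ∀ x, phi (phi x) = x - eta x • xi
  eta_phi : ∀ x, eta (phi x) = 0
  eta_xi : eta xi = 1
  g_phi_phi : ∀ x y, g (phi x) (phi y) = g x y - eta x * eta y
  g_phi : ∀ x y, g (phi x) y = g x (phi y)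
  g_xi : ∀ x, g x xi = eta x
  d_one : ∀ x, d x 1 = 0
  d_mul : ∀ x f h, d x (f * h) = f * d x h + h * d x f
  nabla_add_left : ∀ x y z, nabla (x + y) z = nabla x z + nabla y z
  nabla_smul_left : ∀ (f : C) (x y : V), nabla (f • x) y = f • nabla x y
  nabla_add_right : ∀ x y z, nabla x (y + z) = nabla x y + nabla x z
  nabla_leibniz : ∀ (x : V) (f : C) (y : V), nabla x (f • y) = d x f • y + f • nabla x y
  torsion_free : ∀ x y, nabla x y - nabla y x = lie x y
  metric_compat : ∀ x y z, d x (g y z) = g (nabla x y) z + g y (nabla x z)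

namespace RPM

variable {C : Type*} {V : Type*} [CommRing C] [Algebra ℝ C] [AddCommGroup V] [Module C V]

/-- The fundamental tensor `F(x,y,z) = g((∇ₓφ)y, z)`. -/
def F (M : RPM C V) (x y z : V) : C :=
  M.g (M.nabla x (M.phi y) - M.phi (M.nabla x y)) z

/-- The constant function 1/2. -/
noncomputable def half (M : RPM C V) : C := algebraMap ℝ C (1 / 2)

/-- The first natural connection
`Ḋₓy = ∇ₓy − (1/2){(∇ₓφ)(φy) − (∇ₓη)(y)·ξ} − η(y)∇ₓξ`, where
`(∇ₓφ)(φy) = ∇ₓ(φ²y) − φ(∇ₓ(φy))` and `(∇ₓη)(y) = g(∇ₓξ, y)`. -/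
noncomputable def D1 (M : RPM C V) (x y : V) : V :=
  M.nabla x y
    - M.half • ((M.nabla x (M.phi (M.phi y)) - M.phi (M.nabla x (M.phi y)))
        - M.g (M.nabla x M.xi) y • M.xi)
    - M.eta y • M.nabla x M.xi

/-- The torsion of the first natural connection. -/
noncomputable def T1 (M : RPM C V) (x y : V) : V := M.D1 x y - M.D1 y x - M.lie x y

/-- The Lee form ω = F(ξ,ξ,·). -/
def omegaF (M : RPM C V) (z : V) : C := M.F M.xi M.xi z

end RPM

open RPM

variable {C : Type*} {V : Type*} [CommRing C] [Algebra ℝ C] [AddCommGroup V] [Module C V]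

/-! Since `g` has an inverse Gram matrix on a spanning family, it is nondegenerate, so vectors
are determined by their `g`-products. Metric compatibility gives `∇ₓξ ⊥ ξ`, and then the F₄
condition at `y = ξ` yields `∇ₓξ = -k φx`, while at `φy` it yields `(∇ₓφ)(φy) = k g(x,φy) ξ`,
where `k = θ(ξ)/(2n)`. Substituting both into the definition of `Ḋ` gives the formula. -/

theorem LinearMap.separatingLeft_of_gram_mul_eq_one {R E ι : Type*} [CommRing R]
    [AddCommGroup E] [Module R E] [Fintype ι] [DecidableEq ι] {B : E →ₗ[R] E →ₗ[R] R}
    {b : ι → E} (hspan : ∀ v, v ∈ Submodule.span R (Set.range b)) {G : Matrix ι ι R}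
    (hG : G * Matrix.of (fun i j => B (b i) (b j)) = 1) : B.SeparatingLeft := by
  intro v hv
  obtain ⟨c, rfl⟩ := (Submodule.mem_span_range_iff_exists_fun R).mp (hspan v)
  have hc : Matrix.vecMul c (Matrix.of (fun i j => B (b i) (b j))) = 0 := funext fun j => by
    simpa [Matrix.vecMul, dotProduct] using hv (b j)
  have hc0 : c = 0 := by
    rw [← Matrix.vecMul_one c, ← mul_eq_one_comm.mp hG, ← Matrix.vecMul_vecMul, hc,
      Matrix.zero_vecMul]
  simp [hc0]

namespace RPM

variable (M : RPM C V)

/-- The class F₄ with coefficient `k`; the paper's case is `k = θ(ξ)/(2n)`. -/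
def IsF4 (k : C) : Prop :=
  ∀ x y z, M.F x y z
    = k * (M.g (M.phi x) (M.phi y) * M.eta z + M.g (M.phi x) (M.phi z) * M.eta y)

theorem half_mul_add_self (a : C) : M.half * (a + a) = a := by
  have h : M.half * 2 = 1 := by
    rw [half, ← map_ofNat (algebraMap ℝ C) 2, ← map_mul]
    norm_num
  linear_combination a * h

theorem nabla_zero (x : V) : M.nabla x 0 = 0 := by
  simpa using M.nabla_add_right x 0 0

theorem g_phi_xi (x : V) : M.g (M.phi x) M.xi = 0 := by
  rw [M.g_xi, M.eta_phi]

theorem g_nabla_xi_xi (x : V) : M.g (M.nabla x M.xi) M.xi = 0 := by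
  have h := M.metric_compat x M.xi M.xi
  rw [M.g_xi, M.eta_xi, M.d_one, M.g_symm M.xi] at h
  rw [← M.half_mul_add_self (M.g (M.nabla x M.xi) M.xi), ← h, mul_zero]

variable {M}

theorem eq_of_forall_g_eq (hg : M.g.SeparatingLeft) {u v : V}
    (h : ∀ z, M.g u z = M.g v z) : u = v :=
  sub_eq_zero.mp (hg _ fun z => by rw [map_sub, LinearMap.sub_apply, h, sub_self])

theorem nabla_xi_of_isF4 (hg : M.g.SeparatingLeft) {k : C} (hF : M.IsF4 k) (x : V) :
    M.nabla x M.xi = -(k • M.phi x) := by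
  have hFxi (z : V) : M.g (M.phi (M.nabla x M.xi)) z = -(k * M.g (M.phi x) (M.phi z)) := by
    have h := hF x M.xi z
    rw [F, M.phi_xi, M.nabla_zero, zero_sub, map_neg, LinearMap.neg_apply, M.eta_xi,
      map_zero] at h
    linear_combination -h
  have hdec : M.phi (M.phi (M.nabla x M.xi)) = M.nabla x M.xi := by
    rw [M.phi_sq, ← M.g_xi, M.g_nabla_xi_xi, zero_smul, sub_zero]
  refine eq_of_forall_g_eq hg fun z => ?_
  calc M.g (M.nabla x M.xi) z
      = M.g (M.phi (M.nabla x M.xi)) (M.phi z) := by rw [← M.g_phi, hdec]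
    _ = -(k * M.g (M.phi x) (M.phi (M.phi z))) := hFxi (M.phi z)
    _ = M.g (-(k • M.phi x)) z := by
      rw [M.phi_sq, map_sub, map_smul, M.g_phi_xi]
      simp

theorem nabla_phi_phi_of_isF4 (hg : M.g.SeparatingLeft) {k : C} (hF : M.IsF4 k) (x y : V) :
    M.nabla x (M.phi (M.phi y)) - M.phi (M.nabla x (M.phi y))
      = (k * M.g x (M.phi y)) • M.xi := by
  refine eq_of_forall_g_eq hg fun z => ?_
  have h := hF x (M.phi y) z
  rw [F, M.eta_phi, mul_zero, add_zero, M.g_phi_phi, M.eta_phi, mul_zero, sub_zero] at h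
  rw [h, map_smul, LinearMap.smul_apply, M.g_symm M.xi, M.g_xi, smul_eq_mul]
  ring

theorem D1_of_isF4 (hg : M.g.SeparatingLeft) {k : C} (hF : M.IsF4 k) (x y : V) :
    M.D1 x y = M.nabla x y - k • (M.g x (M.phi y) • M.xi - M.eta y • M.phi x) := by
  have hxi := nabla_xi_of_isF4 hg hF x
  have hgxi : M.g (M.nabla x M.xi) y = -(k * M.g x (M.phi y)) := by
    rw [hxi, map_neg, map_smul, LinearMap.neg_apply, LinearMap.smul_apply, M.g_phi,
      smul_eq_mul]
  rw [D1, nabla_phi_phi_of_isF4 hg hF, hgxi, hxi, ← sub_smul, sub_neg_eq_add, smul_smul,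
    M.half_mul_add_self]
  module

end RPM

theorem stmt14_general (M : RPM C V) (n : ℕ)
    (b : Fin (2 * n + 1) → V)
    (hspan : ∀ v : V, v ∈ Submodule.span C (Set.range b))
    (ginv : Matrix (Fin (2 * n + 1)) (Fin (2 * n + 1)) C)
    (hginv : ∀ i k, (∑ j, ginv i j * M.g (b j) (b k)) = if i = k then 1 else 0)
    (thetaxi : C)
    (hF4 : ∀ x y z, M.F x y z
      = algebraMap ℝ C (1 / (2 * (n : ℝ))) * thetaxi
          * (M.g (M.phi x) (M.phi y) * M.eta z + M.g (M.phi x) (M.phi z) * M.eta y)) :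
    ∀ x y, M.D1 x y
      = M.nabla x y
        - (algebraMap ℝ C (1 / (2 * (n : ℝ))) * thetaxi)
            • (M.g x (M.phi y) • M.xi - M.eta y • M.phi x) := by
  have hg : M.g.SeparatingLeft :=
    LinearMap.separatingLeft_of_gram_mul_eq_one (G := ginv) hspan <| Matrix.ext fun i k => by
      simpa [Matrix.mul_apply, Matrix.one_apply] using hginv i k
  exact D1_of_isF4 hg hF4

/-- On a `(2n+1)`-dimensional Riemannian Π-manifold of class F₄, i.e. with
`F(x,y,z) = (θ(ξ)/(2n)){g(φx,φy)η(z) + g(φx,φz)η(y)}`, the first natural connection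
is `Ḋₓy = ∇ₓy − (θ(ξ)/(2n)){g(x,φy)ξ − η(y)φx}`. -/
theorem stmt14 (M : RPM C V) (n : ℕ) (hn : 0 < n)
    (b : Fin (2 * n + 1) → V) (hb0 : b 0 = M.xi)
    (hbeta : ∀ i : Fin (2 * n + 1), i ≠ 0 → M.eta (b i) = 0)
    (hspan : ∀ v : V, v ∈ Submodule.span C (Set.range b))
    (ginv : Matrix (Fin (2 * n + 1)) (Fin (2 * n + 1)) C)
    (hginv : ∀ i k, (∑ j, ginv i j * M.g (b j) (b k)) = if i = k then 1 else 0)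
    (thetaxi : C)
    (hthetaxi : thetaxi = ∑ i, ∑ j, ginv i j * M.F (b i) (b j) M.xi)
    (hF4 : ∀ x y z, M.F x y z
      = algebraMap ℝ C (1 / (2 * (n : ℝ))) * thetaxi
          * (M.g (M.phi x) (M.phi y) * M.eta z + M.g (M.phi x) (M.phi z) * M.eta y)) :
    ∀ x y, M.D1 x y
      = M.nabla x y
        - (algebraMap ℝ C (1 / (2 * (n : ℝ))) * thetaxi)
            • (M.g x (M.phi y) • M.xi - M.eta y • M.phi x) :=
  stmt14_general M n b hspan ginv hginv thetaxi hF4
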